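/- For n ≥ 3, k ≥ 3, any 1 ≤ i < j ≤ n, and any nonzero integer a, the element a·x_i x_j^{k-1} of S^k H does not lie in the image of the Morita trace MT_k restricted to the special derivation module b_n(k). -/

import Mathlib

open FreeLieAlgebra

/-- The degree-`k` homogeneous part of the free Lie ring on `n` generators,
spanned by left-normed brackets of `k` generators. -/
noncomputable def Ln (n : ℕ) : ℕ → Submodule ℤ (FreeLieAlgebra ℤ (Fin n))
  | 0 => ⊥
  | 1 => Submodule.span ℤ (Set.range (FreeLieAlgebra.of ℤ))
  | (k+2) => Submodule.span ℤ
      {y | ∃ a ∈ Ln n (k+1), ∃ i : Fin n, y = ⁅a, FreeLieAlgebra.of ℤ i⁆}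

/-- Left-normed bracket `[x, xs₁, xs₂, …]`. -/
noncomputable def lnb {n : ℕ} (x : Fin n) (xs : List (Fin n)) : FreeLieAlgebra ℤ (Fin n) :=
  xs.foldl (fun a j => ⁅a, FreeLieAlgebra.of ℤ j⁆) (FreeLieAlgebra.of ℤ x)

/-- The tangential derivation module `p_n(k)` in the representation
`H^* ⊗ L_n(k+1) ≅ (Fin n → L_n)`, spanned by the `x_i^* ⊗ [c, x_i]`. -/
noncomputable def pnM (n k : ℕ) : Submodule ℤ (Fin n → FreeLieAlgebra ℤ (Fin n)) :=
  Submodule.span ℤ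
    {f | ∃ i : Fin n, ∃ c ∈ Ln n k, f = Pi.single i ⁅c, FreeLieAlgebra.of ℤ i⁆}

/-- Summation map sending `Σ x_i^* ⊗ C_i` to `Σ C_i`. -/
noncomputable def sumMap (n : ℕ) :
    (Fin n → FreeLieAlgebra ℤ (Fin n)) →ₗ[ℤ] FreeLieAlgebra ℤ (Fin n) :=
  LinearMap.lsum ℤ (fun _ : Fin n => FreeLieAlgebra ℤ (Fin n)) ℤ (fun _ => LinearMap.id)

/-- The special derivation module `b_n(k)`. -/
noncomputable def bnM (n k : ℕ) : Submodule ℤ (Fin n → FreeLieAlgebra ℤ (Fin n)) :=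
  pnM n k ⊓ LinearMap.ker (sumMap n)

attribute [local instance 100] LieRing.ofAssociativeRing

/-- The embedding of the free Lie ring into the tensor (free) algebra. -/
noncomputable def embT (n : ℕ) : FreeLieAlgebra ℤ (Fin n) →ₗ[ℤ] FreeAlgebra ℤ (Fin n) :=
  (FreeLieAlgebra.lift ℤ (fun i : Fin n => FreeAlgebra.ι ℤ i)).toLinearMap

/-- The word `x_{j₁} ⊗ ⋯ ⊗ x_{j_m}` in the tensor algebra. -/
def wordT {n : ℕ} (L : List (Fin n)) : FreeAlgebra ℤ (Fin n) :=
  (L.map (FreeAlgebra.ι ℤ)).prod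

/-- Contraction of the first tensor factor against `x_i^*`. -/
noncomputable def contractT (n : ℕ) (i : Fin n) :
    FreeAlgebra ℤ (Fin n) →ₗ[ℤ] FreeAlgebra ℤ (Fin n) :=
  (FreeAlgebra.basisFreeMonoid ℤ (Fin n)).constr ℤ fun w =>
    match FreeMonoid.toList w with
    | [] => 0
    | j :: rest => if j = i then wordT rest else 0

/-- Abelianization of the tensor algebra, `T(H) → ⊕ₖ Sᵏ H`. -/
noncomputable def abelT (n : ℕ) : FreeAlgebra ℤ (Fin n) →ₐ[ℤ] MvPolynomial (Fin n) ℤ :=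
  FreeAlgebra.lift ℤ (fun i : Fin n => MvPolynomial.X i)

/-- The Morita trace component at index `p`. -/
noncomputable def MTc (n : ℕ) (p : Fin n) :
    FreeLieAlgebra ℤ (Fin n) →ₗ[ℤ] MvPolynomial (Fin n) ℤ :=
  (abelT n).toLinearMap ∘ₗ contractT n p ∘ₗ embT n

/-- The full Morita trace on `H^* ⊗ L_n(k+1) ≅ (Fin n → L_n)`. -/
noncomputable def MTfull (n : ℕ) :
    (Fin n → FreeLieAlgebra ℤ (Fin n)) →ₗ[ℤ] MvPolynomial (Fin n) ℤ :=
  LinearMap.lsum ℤ (fun _ : Fin n => FreeLieAlgebra ℤ (Fin n)) ℤ (fun p => MTc n p)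

/-!
Evaluate at the weight `e = x_i ↦ 1, x_j ↦ -1`, all other generators `↦ 0`: the monomial
`a x_i x_j^{k-1}` evaluates to `± a ≠ 0`, so it suffices that the evaluated Morita trace vanishes
on `b_n(k)`.

The contraction by `x_p^*` followed by evaluation is read off the `(0,1)` entry of the
representation `x_r ↦ [[0, δ_{pr}], [0, e_r]]`, so on `x_p^* ⊗ [c, x_p]` the evaluated trace is
`μ_p(c) e_p`. In the representation `x_i ↦ E₀₁ + E₁₁`, `x_j ↦ E₁₂ + E₂₂` (others `↦ 0`), every
`c ∈ L_n(d)` with `d ≥ 2` acts as a multiple `t(c) E` of one fixed matrix, and induction on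
brackets gives `μ_i(c) = μ_j(c) = (-1)^{d+1} t(c)`. Hence the evaluated trace of
`Σ_p x_p^* ⊗ [C_p, x_p]` is `(-1)^k` times the `E`-coefficient of `Σ_p [C_p, x_p]`, which is `0`
on `b_n(k)`.
-/

namespace MoritaTrace

variable {n : ℕ}

lemma embT_of (r : Fin n) : embT n (of ℤ r) = FreeAlgebra.ι ℤ r :=
  FreeLieAlgebra.lift_of_apply _ _

lemma embT_lie (u v : FreeLieAlgebra ℤ (Fin n)) :
    embT n ⁅u, v⁆ = embT n u * embT n v - embT n v * embT n u := by
  show FreeLieAlgebra.lift ℤ _ ⁅u, v⁆ = _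
  rw [LieHom.map_lie, Ring.lie_def]
  rfl

lemma wordT_cons (r : Fin n) (l : List (Fin n)) :
    wordT (r :: l) = FreeAlgebra.ι ℤ r * wordT l :=
  List.prod_cons

lemma basisFreeMonoid_eq_wordT (w : FreeMonoid (Fin n)) :
    FreeAlgebra.basisFreeMonoid ℤ (Fin n) w = wordT w.toList := by
  simp [FreeAlgebra.basisFreeMonoid, FreeAlgebra.equivMonoidAlgebraFreeMonoid, wordT,
    FreeMonoid.lift_apply]
  exact one_smul _ _

lemma contractT_wordT_nil (p : Fin n) : contractT n p (wordT []) = 0 := by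
  rw [contractT, ← FreeMonoid.toList_one, ← basisFreeMonoid_eq_wordT]
  erw [Module.Basis.constr_basis]
  rfl

lemma contractT_wordT_cons (p r : Fin n) (l : List (Fin n)) :
    contractT n p (wordT (r :: l)) = if r = p then wordT l else 0 := by
  rw [contractT, ← FreeMonoid.toList_ofList (r :: l), ← basisFreeMonoid_eq_wordT]
  erw [Module.Basis.constr_basis]
  rfl

lemma aeval_abelT_wordT (w : Fin n → ℤ) (l : List (Fin n)) :
    MvPolynomial.aeval w (abelT n (wordT l)) = (l.map w).prod := by
  simp [wordT, abelT, map_list_prod, Function.comp_def]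

def matE : Matrix (Fin 3) (Fin 3) ℤ := !![0, 0, 1; 0, 0, 1; 0, 0, 0]

def matF : Matrix (Fin 2) (Fin 2) ℤ := !![0, 1; 0, 0]

lemma commutator_fin_three (α β γ δ : ℤ) :
    !![0, α, 0; 0, α, β; 0, 0, β] * !![0, γ, 0; 0, γ, δ; 0, 0, δ] -
      !![0, γ, 0; 0, γ, δ; 0, 0, δ] * !![0, α, 0; 0, α, β; 0, 0, β] = (α * δ - γ * β) • matE := by
  ext u v; fin_cases u <;> fin_cases v <;> simp [matE] <;> ring

lemma matE_commutator (α β : ℤ) :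
    matE * !![0, α, 0; 0, α, β; 0, 0, β] - !![0, α, 0; 0, α, β; 0, 0, β] * matE =
      (β - α) • matE := by
  ext u v; fin_cases u <;> fin_cases v <;> simp [matE]

lemma commutator_fin_two (α β γ δ : ℤ) :
    !![0, α; 0, β] * !![0, γ; 0, δ] - !![0, γ; 0, δ] * !![0, α; 0, β] = (α * δ - γ * β) • matF := by
  ext u v; fin_cases u <;> fin_cases v <;> simp [matF]; ring

lemma matF_commutator (γ δ : ℤ) :
    matF * !![0, γ; 0, δ] - !![0, γ; 0, δ] * matF = δ • matF := by
  ext u v; fin_cases u <;> fin_cases v <;> simp [matF]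

noncomputable def rep3 (a b : Fin n → ℤ) : FreeAlgebra ℤ (Fin n) →ₐ[ℤ] Matrix (Fin 3) (Fin 3) ℤ :=
  FreeAlgebra.lift ℤ fun r => !![0, a r, 0; 0, a r, b r; 0, 0, b r]

noncomputable def rep2 (a w : Fin n → ℤ) : FreeAlgebra ℤ (Fin n) →ₐ[ℤ] Matrix (Fin 2) (Fin 2) ℤ :=
  FreeAlgebra.lift ℤ fun r => !![0, a r; 0, w r]

lemma rep3_ι (a b : Fin n → ℤ) (r : Fin n) :
    rep3 a b (FreeAlgebra.ι ℤ r) = !![0, a r, 0; 0, a r, b r; 0, 0, b r] :=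
  FreeAlgebra.lift_ι_apply _ _

lemma rep2_ι (a w : Fin n → ℤ) (r : Fin n) :
    rep2 a w (FreeAlgebra.ι ℤ r) = !![0, a r; 0, w r] :=
  FreeAlgebra.lift_ι_apply _ _

lemma rep2_wordT_apply_one (a w : Fin n → ℤ) (l : List (Fin n)) :
    rep2 a w (wordT l) 1 = ![0, (l.map w).prod] := by
  induction l with
  | nil => ext u; fin_cases u <;> simp [wordT]
  | cons r l ih =>
    have h0 := congrFun ih 0
    have h1 := congrFun ih 1
    simp only [Matrix.cons_val_zero, Matrix.cons_val_one] at h0 h1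
    ext u; fin_cases u <;>
      simp [wordT_cons, rep2_ι, Matrix.mul_apply, Fin.sum_univ_two, h0, h1]

lemma aeval_abelT_contractT (w : Fin n → ℤ) (p : Fin n) (Z : FreeAlgebra ℤ (Fin n)) :
    MvPolynomial.aeval w (abelT n (contractT n p Z)) = rep2 (Pi.single p 1) w Z 0 1 := by
  suffices (MvPolynomial.aeval w).toLinearMap ∘ₗ (abelT n).toLinearMap ∘ₗ contractT n p =
      Matrix.entryLinearMap ℤ ℤ 0 1 ∘ₗ (rep2 (Pi.single p 1) w).toLinearMap from
    LinearMap.congr_fun this Z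
  refine (FreeAlgebra.basisFreeMonoid ℤ (Fin n)).ext fun m => ?_
  change MvPolynomial.aeval w (abelT n (contractT n p _)) = rep2 _ w _ 0 1
  rw [basisFreeMonoid_eq_wordT]
  rcases m.toList with _ | ⟨r, l⟩
  · rw [contractT_wordT_nil]
    simp [wordT]
  · have h1 := congrFun (rep2_wordT_apply_one (Pi.single p 1) w l) 1
    simp only [Matrix.cons_val_one, Matrix.cons_val_zero] at h1
    rw [contractT_wordT_cons, wordT_cons, map_mul, Matrix.mul_apply, Fin.sum_univ_two, rep2_ι, h1]
    by_cases hr : r = p <;> simp [hr, aeval_abelT_wordT]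

lemma rep3_embT_lie_of_of (a b : Fin n → ℤ) (r q : Fin n) :
    rep3 a b (embT n ⁅of ℤ r, of ℤ q⁆) = (a r * b q - a q * b r) • matE := by
  rw [embT_lie, map_sub, map_mul, map_mul, embT_of, embT_of, rep3_ι, rep3_ι, commutator_fin_three]

lemma rep2_embT_lie_of_of (a w : Fin n → ℤ) (r q : Fin n) :
    rep2 a w (embT n ⁅of ℤ r, of ℤ q⁆) = (a r * w q - a q * w r) • matF := by
  rw [embT_lie, map_sub, map_mul, map_mul, embT_of, embT_of, rep2_ι, rep2_ι, commutator_fin_two]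

lemma rep3_embT_lie_of (a b : Fin n → ℤ) {c : FreeLieAlgebra ℤ (Fin n)} {t : ℤ}
    (h : rep3 a b (embT n c) = t • matE) (q : Fin n) :
    rep3 a b (embT n ⁅c, of ℤ q⁆) = (-((a q - b q) * t)) • matE := by
  rw [embT_lie, map_sub, map_mul, map_mul, h, embT_of, rep3_ι, Matrix.smul_mul, Matrix.mul_smul,
    ← smul_sub, matE_commutator, smul_smul]
  congr 1
  ring

lemma rep2_embT_lie_of (a w : Fin n → ℤ) {c : FreeLieAlgebra ℤ (Fin n)} {μ : ℤ}
    (h : rep2 a w (embT n c) = μ • matF) (q : Fin n) :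
    rep2 a w (embT n ⁅c, of ℤ q⁆) = (μ * w q) • matF := by
  rw [embT_lie, map_sub, map_mul, map_mul, h, embT_of, rep2_ι, Matrix.smul_mul, Matrix.mul_smul,
    ← smul_sub, matF_commutator, smul_smul]

lemma Ln_add_two_le {S : ℕ → Submodule ℤ (FreeLieAlgebra ℤ (Fin n))}
    (base : ∀ r q : Fin n, ⁅of ℤ r, of ℤ q⁆ ∈ S 2)
    (step : ∀ d c (q : Fin n), c ∈ S d → ⁅c, of ℤ q⁆ ∈ S (d + 1)) :
    ∀ m, Ln n (m + 2) ≤ S (m + 2)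
  | 0 => by
    refine Submodule.span_le.mpr ?_
    rintro _ ⟨a, ha, q, rfl⟩
    induction ha using Submodule.span_induction with
    | mem x hx => obtain ⟨r, rfl⟩ := hx; exact base r q
    | zero => rw [zero_lie]; exact zero_mem _
    | add x y _ _ hx hy => rw [add_lie]; exact add_mem hx hy
    | smul z x _ hx => rw [smul_lie]; exact Submodule.smul_mem _ z hx
  | m + 1 => Submodule.span_le.mpr <| by
    rintro _ ⟨a, ha, q, rfl⟩
    exact step _ a q (Ln_add_two_le base step m ha)

def weight (i j : Fin n) : Fin n → ℤ := Pi.single i 1 - Pi.single j 1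

lemma mul_weight_eq {i j : Fin n} {μ : Fin n → ℤ} {s : ℤ} (hi : μ i = s) (hj : μ j = s)
    (p : Fin n) : μ p * weight i j p = s * weight i j p := by
  simp only [weight, Pi.sub_apply, Pi.single_apply]
  split_ifs <;> simp_all

def repLocus (i j : Fin n) (d : ℕ) : Submodule ℤ (FreeLieAlgebra ℤ (Fin n)) where
  carrier := {c | ∃ t : ℤ, ∃ μ : Fin n → ℤ,
    rep3 (Pi.single i 1) (Pi.single j 1) (embT n c) = t • matE ∧
    (∀ p, rep2 (Pi.single p 1) (weight i j) (embT n c) = μ p • matF) ∧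
    μ i = (-1) ^ (d + 1) * t ∧ μ j = (-1) ^ (d + 1) * t}
  zero_mem' := ⟨0, 0, by simp, by simp, by simp, by simp⟩
  add_mem' := by
    rintro _ _ ⟨t, μ, hA, hB, hi, hj⟩ ⟨t', μ', hA', hB', hi', hj'⟩
    refine ⟨t + t', μ + μ', ?_, fun p => ?_, ?_, ?_⟩
    · rw [map_add, map_add, hA, hA', add_smul]
    · rw [map_add, map_add, hB, hB', Pi.add_apply, add_smul]
    · rw [Pi.add_apply, hi, hi']; ring
    · rw [Pi.add_apply, hj, hj']; ring
  smul_mem' := by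
    rintro z _ ⟨t, μ, hA, hB, hi, hj⟩
    refine ⟨z * t, z • μ, ?_, fun p => ?_, ?_, ?_⟩
    · rw [map_zsmul, map_zsmul, hA, smul_smul]
    · rw [map_zsmul, map_zsmul, hB, Pi.smul_apply, smul_smul, smul_eq_mul]
    · rw [Pi.smul_apply, hi, smul_eq_mul]; ring
    · rw [Pi.smul_apply, hj, smul_eq_mul]; ring

lemma Ln_le_repLocus (i j : Fin n) (m : ℕ) : Ln n (m + 2) ≤ repLocus i j (m + 2) := by
  refine Ln_add_two_le (S := repLocus i j) (fun r q => ?_)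
    (fun d c q ⟨t, μ, hA, hB, hi, hj⟩ => ?_) m
  · refine ⟨_, fun p => (Pi.single p 1 : Fin n → ℤ) r * weight i j q -
        (Pi.single p 1 : Fin n → ℤ) q * weight i j r,
      rep3_embT_lie_of_of _ _ r q, fun p => rep2_embT_lie_of_of _ _ r q, ?_, ?_⟩ <;>
    simp only [weight, Pi.sub_apply] <;> ring
  · refine ⟨_, fun p => μ p * weight i j q, rep3_embT_lie_of _ _ hA q,
      fun p => rep2_embT_lie_of _ _ (hB p) q, ?_, ?_⟩ <;>
    simp only [weight, Pi.sub_apply, hi, hj] <;> ring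

lemma aeval_weight_MTfull {i j : Fin n} {k : ℕ} (hk : 2 ≤ k)
    {f : Fin n → FreeLieAlgebra ℤ (Fin n)} (hf : f ∈ pnM n k) :
    MvPolynomial.aeval (weight i j) (MTfull n f) =
      (-1) ^ k * rep3 (Pi.single i 1) (Pi.single j 1) (embT n (sumMap n f)) 0 2 := by
  obtain ⟨m, rfl⟩ := Nat.exists_eq_add_of_le' hk
  let φ := (MvPolynomial.aeval (weight i j)).toLinearMap ∘ₗ MTfull n
  let ψ := ((-1) ^ (m + 2) : ℤ) • (Matrix.entryLinearMap ℤ ℤ 0 2 ∘ₗ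
    (rep3 (Pi.single i 1) (Pi.single j 1)).toLinearMap ∘ₗ embT n ∘ₗ sumMap n)
  refine LinearMap.eqOn_span (f := φ) (g := ψ) ?_ hf
  rintro _ ⟨p, c, hc, rfl⟩
  obtain ⟨t, μ, hA, hB, hi, hj⟩ := Ln_le_repLocus i j m hc
  change MvPolynomial.aeval (weight i j) (MTfull n _) =
    (-1) ^ (m + 2) * rep3 _ _ (embT n (sumMap n _)) 0 2
  rw [MTfull, LinearMap.lsum_piSingle, sumMap, LinearMap.lsum_piSingle, LinearMap.id_apply,
    rep3_embT_lie_of _ _ hA]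
  change MvPolynomial.aeval (weight i j) (abelT n (contractT n p (embT n _))) = _
  rw [aeval_abelT_contractT, rep2_embT_lie_of _ _ (hB p), Matrix.smul_apply, Matrix.smul_apply,
    mul_weight_eq hi hj]
  simp [matE, matF, weight]
  ring

lemma aeval_weight_MTfull_eq_zero {i j : Fin n} {k : ℕ} (hk : 2 ≤ k)
    {f : Fin n → FreeLieAlgebra ℤ (Fin n)} (hf : f ∈ bnM n k) :
    MvPolynomial.aeval (weight i j) (MTfull n f) = 0 := by
  rw [aeval_weight_MTfull hk hf.1, LinearMap.mem_ker.mp hf.2]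
  simp

end MoritaTrace

theorem monomial_not_in_morita_image_general (n k : ℕ) (h3 : 3 ≤ k)
    (i j : Fin n) (hij : i < j) (a : ℤ) (ha : a ≠ 0) :
    ¬ ∃ f ∈ bnM n k, MTfull n f =
        a • (MvPolynomial.X i * MvPolynomial.X j ^ (k - 1)) := by
  rintro ⟨f, hf, hMT⟩
  have h := MoritaTrace.aeval_weight_MTfull_eq_zero (i := i) (j := j) (by omega) hf
  rw [hMT] at h
  simp [MoritaTrace.weight, hij.ne, hij.ne'] at h
  exact ha h

/-- For `n ≥ 3`, `k ≥ 3`, `i < j` and any nonzero integer `a`, the element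
`a · x_i x_j^{k-1}` of `Sᵏ H` is not in the image of the Morita trace restricted to the
special derivation module `b_n(k)`. -/
theorem monomial_not_in_morita_image (n k : ℕ) (hn : 3 ≤ n) (h3 : 3 ≤ k)
    (i j : Fin n) (hij : i < j) (a : ℤ) (ha : a ≠ 0) :
    ¬ ∃ f ∈ bnM n k, MTfull n f =
        a • (MvPolynomial.X i * MvPolynomial.X j ^ (k - 1)) :=
  monomial_not_in_morita_image_general n k h3 i j hij a ha
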